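/- arXiv:0709.2010 — 5 statements merged into one kernel-verified Lean document; each statement's English description precedes it below -/
import Mathlib

section
/- Let d ≥ 1 and for each n ≥ 0 let T_n : ℝ^d → ℝ^d be a linear map. Then the limit as ε → 0 of the limsup over n of (1/n) log of the maximal cardinality of a set S ⊆ ℝ^d such that (i) for every 0 ≤ k < n the diameter of T_{k-1}∘⋯∘T_0(S) is at most 1, and (ii) for all distinct x, y ∈ S there exists 0 ≤ k < n with ‖T_{k-1}∘⋯∘T_0(x−y)‖ > ε, is equal to 0. -/
/-!
All the maps are linear, so the two conditions only involve the single linear map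
`Φₙ = (T_{k-1} ∘ ⋯ ∘ T_0)_{k<n}` into `(ℝ^d)^n` with the sup norm: the image of `S` under `Φₙ`
has diameter `≤ 1` and is `ε`-separated. It lives in the subspace `range Φₙ`, of dimension at
most `d` whatever `n` is, so a volume comparison of disjoint balls bounds `#S` by
`((2 + ε) / ε) ^ d`, independently of `n`. Hence the growth rate is `0` for every `ε > 0`.
-/

open Filter Metric

/-- Composition `T_{k-1} ∘ ⋯ ∘ T_0` of the first `k` linear maps (identity for `k = 0`). -/
noncomputable def compMaps {d : ℕ} (T : ℕ → (EuclideanSpace ℝ (Fin d) →ₗ[ℝ] EuclideanSpace ℝ (Fin d))) :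
    ℕ → (EuclideanSpace ℝ (Fin d) →ₗ[ℝ] EuclideanSpace ℝ (Fin d))
  | 0 => LinearMap.id
  | (k + 1) => (T k).comp (compMaps T k)

/-- Maximal cardinality of a set `S` which stays of diameter `≤ 1` during `n` steps while
any two of its points get `ε`-separated at some time `k < n`. -/
noncomputable def sepMaxCard {d : ℕ}
    (T : ℕ → (EuclideanSpace ℝ (Fin d) →ₗ[ℝ] EuclideanSpace ℝ (Fin d)))
    (ε : ℝ) (n : ℕ) : ℕ :=
  sSup {m : ℕ | ∃ S : Finset (EuclideanSpace ℝ (Fin d)), S.card = m ∧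
    (∀ k < n, Metric.diam ((compMaps T k) '' (S : Set (EuclideanSpace ℝ (Fin d)))) ≤ 1) ∧
    (∀ x ∈ S, ∀ y ∈ S, x ≠ y → ∃ k < n, ε < ‖(compMaps T k) (x - y)‖)}

open MeasureTheory Module

open scoped ENNReal

lemma card_mul_pow_le_of_pairwiseDisjoint_ball {E : Type*} [NormedAddCommGroup E]
    [NormedSpace ℝ E] [FiniteDimensional ℝ E] (s : Finset E) (x₀ : E) {r R : ℝ} (hr : 0 < r)
    (hR : 0 < R) (hdisj : (s : Set E).PairwiseDisjoint (ball · r))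
    (hsub : ∀ x ∈ s, ball x r ⊆ ball x₀ R) :
    (s.card : ℝ) * r ^ finrank ℝ E ≤ R ^ finrank ℝ E := by
  borelize E
  let μ : Measure E := Measure.addHaar
  have hvol : (s.card : ℝ≥0∞) * ENNReal.ofReal (r ^ finrank ℝ E) * μ (ball 0 1) ≤
      ENNReal.ofReal (R ^ finrank ℝ E) * μ (ball 0 1) :=
    calc (s.card : ℝ≥0∞) * ENNReal.ofReal (r ^ finrank ℝ E) * μ (ball 0 1)
        = μ (⋃ x ∈ s, ball x r) := by
          rw [measure_biUnion_finset hdisj fun x _ => measurableSet_ball]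
          simp only [μ.addHaar_ball_of_pos _ hr, Finset.sum_const, nsmul_eq_mul, mul_assoc]
      _ ≤ μ (ball x₀ R) := measure_mono (Set.iUnion₂_subset hsub)
      _ = ENNReal.ofReal (R ^ finrank ℝ E) * μ (ball 0 1) := μ.addHaar_ball_of_pos _ hR
  have := ENNReal.toReal_le_of_le_ofReal (by positivity)
    ((ENNReal.mul_le_mul_iff_left (measure_ball_pos μ 0 one_pos).ne'
      measure_ball_lt_top.ne).1 hvol)
  rwa [ENNReal.toReal_mul, ENNReal.toReal_natCast, ENNReal.toReal_ofReal (by positivity)]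
    at this

lemma card_le_of_norm_sub_le_one_of_separated {E : Type*} [NormedAddCommGroup E]
    [NormedSpace ℝ E] [FiniteDimensional ℝ E] {ε : ℝ} (hε : 0 < ε) (s : Finset E)
    (hdiam : ∀ x ∈ s, ∀ y ∈ s, ‖x - y‖ ≤ 1)
    (hsep : ∀ x ∈ s, ∀ y ∈ s, x ≠ y → ε < ‖x - y‖) :
    (s.card : ℝ) ≤ ((2 + ε) / ε) ^ finrank ℝ E := by
  rcases s.eq_empty_or_nonempty with rfl | ⟨x₀, hx₀⟩
  · simp only [Finset.card_empty, Nat.cast_zero]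
    positivity
  have hpacking := card_mul_pow_le_of_pairwiseDisjoint_ball s x₀ (half_pos hε)
    (R := 1 + ε / 2) (by positivity)
    (fun x hx y hy hxy => ball_disjoint_ball <| by
      rw [dist_eq_norm]
      linarith [hsep x hx y hy hxy])
    (fun x hx => ball_subset_ball' <| by
      rw [dist_eq_norm]
      linarith [hdiam x hx x₀ hx₀])
  calc (s.card : ℝ) ≤ (1 + ε / 2) ^ finrank ℝ E / (ε / 2) ^ finrank ℝ E := by
        rwa [le_div_iff₀ (by positivity)]
    _ = ((2 + ε) / ε) ^ finrank ℝ E := by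
        rw [← div_pow]
        congr 1
        field_simp

lemma card_le_of_norm_map_sub_le_one_of_separated {V F : Type*} [AddCommGroup V] [Module ℝ V]
    [FiniteDimensional ℝ V] [NormedAddCommGroup F] [NormedSpace ℝ F] (Φ : V →ₗ[ℝ] F)
    {ε : ℝ} (hε : 0 < ε) (s : Finset V)
    (hdiam : ∀ x ∈ s, ∀ y ∈ s, ‖Φ (x - y)‖ ≤ 1)
    (hsep : ∀ x ∈ s, ∀ y ∈ s, x ≠ y → ε < ‖Φ (x - y)‖) :
    (s.card : ℝ) ≤ ((2 + ε) / ε) ^ finrank ℝ V := by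
  classical
  let σ := Φ.rangeRestrict
  have hσ : ∀ x y, ‖σ x - σ y‖ = ‖Φ (x - y)‖ := fun x y => by
    rw [← map_sub]
    rfl
  have hinj : Set.InjOn σ s := fun x hx y hy hxy => by
    by_contra hne
    have := hsep x hx y hy hne
    rw [← hσ, hxy, sub_self, norm_zero] at this
    exact hε.not_gt this
  have hbound := card_le_of_norm_sub_le_one_of_separated hε (s.image σ)
    (by simp only [Finset.forall_mem_image, hσ]; exact hdiam)
    (by
      simp only [Finset.forall_mem_image, hσ]
      exact fun x hx y hy hne => hsep x hx y hy fun h => hne (congrArg σ h))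
  rw [Finset.card_image_of_injOn hinj] at hbound
  exact hbound.trans <| pow_le_pow_right₀ (by rw [le_div_iff₀ hε]; linarith)
    (LinearMap.finrank_range_le Φ)

lemma card_le_of_diam_compMaps_le_one_of_separated {d : ℕ}
    (T : ℕ → (EuclideanSpace ℝ (Fin d) →ₗ[ℝ] EuclideanSpace ℝ (Fin d)))
    {ε : ℝ} (hε : 0 < ε) {n : ℕ} (S : Finset (EuclideanSpace ℝ (Fin d)))
    (hdiam : ∀ k < n, diam ((compMaps T k) '' (S : Set (EuclideanSpace ℝ (Fin d)))) ≤ 1)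
    (hsep : ∀ x ∈ S, ∀ y ∈ S, x ≠ y → ∃ k < n, ε < ‖(compMaps T k) (x - y)‖) :
    (S.card : ℝ) ≤ ((2 + ε) / ε) ^ d := by
  let Φ := LinearMap.pi fun k : Fin n => compMaps T k
  refine (card_le_of_norm_map_sub_le_one_of_separated Φ hε S (fun x hx y hy => ?_)
    (fun x hx y hy hne => ?_)).trans_eq (by rw [finrank_euclideanSpace_fin])
  · refine (pi_norm_le_iff_of_nonneg zero_le_one).2 fun k => ?_
    rw [LinearMap.pi_apply, map_sub, ← dist_eq_norm]
    exact (dist_le_diam_of_mem (S.finite_toSet.image _).isBounded (Set.mem_image_of_mem _ hx)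
      (Set.mem_image_of_mem _ hy)).trans (hdiam k k.isLt)
  · obtain ⟨k, hk, hlt⟩ := hsep x hx y hy hne
    exact hlt.trans_le (norm_le_pi_norm (Φ (x - y)) ⟨k, hk⟩)

lemma sepMaxCard_le {d : ℕ}
    (T : ℕ → (EuclideanSpace ℝ (Fin d) →ₗ[ℝ] EuclideanSpace ℝ (Fin d)))
    {ε : ℝ} (hε : 0 < ε) (n : ℕ) :
    (sepMaxCard T ε n : ℝ) ≤ ((2 + ε) / ε) ^ d := by
  have : sepMaxCard T ε n ≤ ⌊((2 + ε) / ε) ^ d⌋₊ := csSup_le' <| by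
    rintro _ ⟨S, rfl, hdiam, hsep⟩
    exact Nat.le_floor (card_le_of_diam_compMaps_le_one_of_separated T hε S hdiam hsep)
  exact (Nat.cast_le.2 this).trans (Nat.floor_le (by positivity))

lemma tendsto_log_div_of_le {u : ℕ → ℕ} {C : ℝ} (hu : ∀ n, (u n : ℝ) ≤ C) :
    Tendsto (fun n : ℕ => Real.log (u n) / n) atTop (nhds 0) := by
  refine squeeze_zero (fun n => div_nonneg (Real.log_natCast_nonneg _) n.cast_nonneg)
    (fun n => ?_) (tendsto_const_div_atTop_nhds_zero_nat C)
  gcongr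
  exact (Real.log_le_self (u n).cast_nonneg).trans (hu n)

theorem linear_maps_separated_sets_zero_entropy_general {d : ℕ}
    (T : ℕ → (EuclideanSpace ℝ (Fin d) →ₗ[ℝ] EuclideanSpace ℝ (Fin d))) :
    Filter.Tendsto
      (fun ε : ℝ =>
        Filter.limsup (fun n : ℕ => Real.log (sepMaxCard T ε n) / n) Filter.atTop)
      (nhdsWithin 0 (Set.Ioi 0)) (nhds 0) := by
  refine tendsto_const_nhds.congr' ?_
  filter_upwards [self_mem_nhdsWithin] with ε hε
  exact ((tendsto_log_div_of_le (sepMaxCard_le T hε)).limsup_eq).symm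

theorem linear_maps_separated_sets_zero_entropy {d : ℕ} (hd : 1 ≤ d)
    (T : ℕ → (EuclideanSpace ℝ (Fin d) →ₗ[ℝ] EuclideanSpace ℝ (Fin d))) :
    Filter.Tendsto
      (fun ε : ℝ =>
        Filter.limsup (fun n : ℕ => Real.log (sepMaxCard T ε n) / n) Filter.atTop)
      (nhdsWithin 0 (Set.Ioi 0)) (nhds 0) :=
  linear_maps_separated_sets_zero_entropy_general T
end

section
/- Let G be a countable oriented graph and G₀ ⊆ G₁ ⊆ ⋯ a nondecreasing sequence of finite subgraphs such that every vertex and every edge of G belongs to G_n for all sufficiently large n. Then the Gurevich entropies satisfy lim_{n→∞} h_top(G_n) = h_top(G). -/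
/-!
Restricting the edge relation can only remove loops, so `h(G_n)` is nondecreasing and bounded
by `h(G)`; it therefore converges to its supremum, and it remains to bound `h(G)` by that
supremum. Concatenating loops at `v` makes `n ↦ loopCount E v n` supermultiplicative, so the
limsup at `v` dominates every single rate `m⁻¹ log (loopCount E v m)`. Each such rate for `G` is
the supremum of the corresponding rates for the `G_N`: a loop uses finitely many edges, hence
lies in `G_N` for `N` large, and `x ↦ m⁻¹ log x` commutes with suprema.
-/

open Filter
open scoped ENNReal

variable {V : Type*}

/-- The number (in `ℕ∞`) of loops of length `n` based at `v` in the oriented graph with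
edge relation `E`. -/
noncomputable def loopCount (E : V → V → Prop) (v : V) (n : ℕ) : ℕ∞ :=
  Set.encard {f : Fin (n + 1) → V |
    f 0 = v ∧ f (Fin.last n) = v ∧ ∀ k : Fin n, E (f k.castSucc) (f k.succ)}

/-- The Gurevich entropy of a countable oriented graph: the supremum over vertices of the
exponential growth rate of the number of loops based at that vertex. -/
noncomputable def gurevichEntropy (E : V → V → Prop) : EReal :=
  ⨆ v : V, Filter.limsup
    (fun n : ℕ => (((n : ℝ)⁻¹ : ℝ) : EReal) * ENNReal.log ((loopCount E v n : ℝ≥0∞))) atTop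

theorem Set.encard_le_iSup_of_subset_iUnion {α ι : Type*} [Nonempty ι] {s : Set α}
    {t : ι → Set α} (ht : Directed (· ⊆ ·) t) (hs : s ⊆ ⋃ i, t i) :
    s.encard ≤ ⨆ i, (t i).encard := by
  refine ENat.forall_natCast_le_iff_le.mp fun c hc => ?_
  obtain ⟨u, hus, hu⟩ := Set.exists_subset_encard_eq hc
  have hufin : u.Finite := Set.finite_of_encard_eq_coe hu
  obtain ⟨i, hi⟩ := ht.exists_mem_subset_of_finset_subset_biUnion (s := hufin.toFinset)
    (by simpa using hus.trans hs)
  rw [← hu]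
  exact (Set.encard_le_encard (by simpa using hi)).trans (le_iSup (fun i => (t i).encard) i)

theorem ENNReal.coe_mul_log_iSup {ι : Sort*} {c : ℝ} (hc : 0 < c) (x : ι → ℝ≥0∞) :
    (c : EReal) * ENNReal.log (⨆ i, x i) = ⨆ i, (c : EReal) * ENNReal.log (x i) := by
  have key := congrArg ENNReal.logOrderIso ((ENNReal.orderIsoRpow c hc).map_iSup x)
  rw [ENNReal.logOrderIso.map_iSup] at key
  simpa only [ENNReal.logOrderIso_apply, ENNReal.orderIsoRpow_apply, ENNReal.log_rpow] using key

section Loops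

variable (E : V → V → Prop)

def loopSet (v : V) (n : ℕ) : Set (Fin (n + 1) → V) :=
  {f | f 0 = v ∧ f (Fin.last n) = v ∧ ∀ k : Fin n, E (f k.castSucc) (f k.succ)}

theorem loopCount_eq_encard (v : V) (n : ℕ) : loopCount E v n = (loopSet E v n).encard := rfl

variable {E}

theorem loopSet_mono {E' : V → V → Prop} (h : E ≤ E') (v : V) (n : ℕ) :
    loopSet E v n ⊆ loopSet E' v n :=
  fun _ hf => ⟨hf.1, hf.2.1, fun k => h _ _ (hf.2.2 k)⟩

def loopAppend {a b : ℕ} (f : Fin (a + 1) → V) (g : Fin (b + 1) → V) (i : Fin (a + b + 1)) :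
    V :=
  if h : (i : ℕ) ≤ a then f ⟨i, by omega⟩ else g ⟨i - a, by omega⟩

variable {a b : ℕ} {f : Fin (a + 1) → V} {g : Fin (b + 1) → V}

theorem loopAppend_of_le {i : Fin (a + b + 1)} (hi : (i : ℕ) ≤ a) :
    loopAppend f g i = f ⟨i, by omega⟩ :=
  dif_pos hi

theorem loopAppend_of_ge (hfg : f (Fin.last a) = g 0) {i : Fin (a + b + 1)} (hi : a ≤ (i : ℕ)) :
    loopAppend f g i = g ⟨i - a, by omega⟩ := by
  unfold loopAppend
  split_ifs with h
  · convert hfg using 2 <;> ext <;> simp <;> omega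
  · rfl

theorem loopAppend_mem_loopSet {v : V} (hf : f ∈ loopSet E v a) (hg : g ∈ loopSet E v b) :
    loopAppend f g ∈ loopSet E v (a + b) := by
  have hfg : f (Fin.last a) = g 0 := hf.2.1.trans hg.1.symm
  refine ⟨?_, ?_, fun k => ?_⟩
  · rw [loopAppend_of_le (Nat.zero_le a)]
    exact hf.1
  · rw [loopAppend_of_ge hfg (by simp)]
    convert hg.2.1 using 2
    ext
    simp
  · by_cases hk : (k : ℕ) < a
    · rw [loopAppend_of_le (by simp; omega), loopAppend_of_le (by simp; omega)]
      exact hf.2.2 ⟨k, hk⟩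
    · rw [loopAppend_of_ge hfg (by simp; omega), loopAppend_of_ge hfg (by simp; omega)]
      convert hg.2.2 ⟨k - a, by omega⟩ using 2 <;> ext <;> simp; omega

theorem loopAppend_injOn {v : V} :
    Set.InjOn (fun p => loopAppend p.1 p.2) (loopSet E v a ×ˢ loopSet E v b) := by
  rintro ⟨f, g⟩ ⟨hf, hg⟩ ⟨f', g'⟩ ⟨hf', hg'⟩ heq
  have hfg : f (Fin.last a) = g 0 := hf.2.1.trans hg.1.symm
  have hfg' : f' (Fin.last a) = g' 0 := hf'.2.1.trans hg'.1.symm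
  simp only at heq
  refine Prod.ext (funext fun i => ?_) (funext fun j => ?_)
  · simpa [loopAppend_of_le, i.is_le] using congrFun heq ⟨i, by omega⟩
  · simpa [loopAppend_of_ge, hfg, hfg'] using congrFun heq ⟨a + j, by omega⟩

theorem loopCount_mul_le_loopCount_add (v : V) (m n : ℕ) :
    loopCount E v m * loopCount E v n ≤ loopCount E v (m + n) := by
  rw [loopCount_eq_encard, loopCount_eq_encard, loopCount_eq_encard, ← Set.encard_prod,
    ← loopAppend_injOn.encard_image]
  exact Set.encard_le_encard <| Set.image_subset_iff.2 fun p hp => loopAppend_mem_loopSet hp.1 hp.2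

end Loops

noncomputable def loopRate (E : V → V → Prop) (v : V) (n : ℕ) : EReal :=
  (((n : ℝ)⁻¹ : ℝ) : EReal) * ENNReal.log (loopCount E v n : ℝ≥0∞)

theorem gurevichEntropy_eq_iSup_limsup_loopRate (E : V → V → Prop) :
    gurevichEntropy E = ⨆ v, limsup (loopRate E v) atTop :=
  rfl

section Growth

variable {E : V → V → Prop} {v : V}

theorem one_le_loopCount_zero : 1 ≤ loopCount E v 0 :=
  Set.one_le_encard_iff_nonempty.2 ⟨fun _ => v, rfl, rfl, Fin.elim0⟩

theorem loopCount_pow_le_loopCount_mul (m k : ℕ) :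
    loopCount E v m ^ k ≤ loopCount E v (k * m) := by
  induction k with
  | zero => simpa using one_le_loopCount_zero
  | succ k ih =>
    calc loopCount E v m ^ (k + 1) = loopCount E v m ^ k * loopCount E v m := pow_succ _ _
      _ ≤ loopCount E v (k * m) * loopCount E v m := mul_le_mul_left ih _
      _ ≤ loopCount E v ((k + 1) * m) := by
        rw [Nat.succ_mul]
        exact loopCount_mul_le_loopCount_add v _ _

theorem loopRate_le_loopRate_mul {k : ℕ} (hk : 0 < k) (m : ℕ) :
    loopRate E v m ≤ loopRate E v (k * m) := by
  have hpow : (loopCount E v m : ℝ≥0∞) ^ k ≤ loopCount E v (k * m) := by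
    rw [← ENat.toENNReal_pow]
    exact ENat.toENNReal_le.2 (loopCount_pow_le_loopCount_mul m k)
  have hcoeff : (((k * m : ℕ) : ℝ)⁻¹ : ℝ) * (k : ℝ) = (m : ℝ)⁻¹ := by
    push_cast
    field_simp
  calc loopRate E v m
      = ((((k * m : ℕ) : ℝ)⁻¹ : ℝ) : EReal) *
          (k * ENNReal.log (loopCount E v m : ℝ≥0∞)) := by
        rw [loopRate, ← hcoeff, EReal.coe_mul, mul_assoc, EReal.coe_natCast]
    _ ≤ loopRate E v (k * m) := by
        rw [loopRate, ← ENNReal.log_pow]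
        gcongr

theorem loopRate_le_limsup_loopRate {m : ℕ} (hm : 0 < m) :
    loopRate E v m ≤ limsup (loopRate E v) atTop := by
  refine le_limsup_of_frequently_le (frequently_atTop.2 fun N => ?_) (by isBoundedDefault)
  exact ⟨(N + 1) * m, Nat.le_mul_of_pos_right _ hm |>.trans' N.le_succ,
    loopRate_le_loopRate_mul N.succ_pos m⟩

theorem loopRate_le_gurevichEntropy {m : ℕ} (hm : 0 < m) :
    loopRate E v m ≤ gurevichEntropy E := by
  rw [gurevichEntropy_eq_iSup_limsup_loopRate]
  exact (loopRate_le_limsup_loopRate hm).trans (le_iSup (fun w => limsup (loopRate E w) atTop) v)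

end Growth

theorem loopRate_mono {E E' : V → V → Prop} (h : E ≤ E') (v : V) (n : ℕ) :
    loopRate E v n ≤ loopRate E' v n := by
  unfold loopRate
  gcongr
  exact Set.encard_le_encard (loopSet_mono h v n)

theorem gurevichEntropy_mono : Monotone (gurevichEntropy (V := V)) := fun _ _ h => by
  simp only [gurevichEntropy_eq_iSup_limsup_loopRate]
  exact iSup_mono fun v => limsup_le_limsup (Eventually.of_forall (loopRate_mono h v))

section Exhaustion

variable {E : V → V → Prop} {Eseq : ℕ → V → V → Prop}

theorem loopCount_le_iSup_of_exhaustion (hmono : Monotone Eseq)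
    (hexh : ∀ a b, E a b → ∀ᶠ N in atTop, Eseq N a b) (v : V) (m : ℕ) :
    loopCount E v m ≤ ⨆ N, loopCount (Eseq N) v m := by
  refine Set.encard_le_iSup_of_subset_iUnion
    (Monotone.directed_le fun N N' h => loopSet_mono (hmono h) v m) fun f hf => ?_
  obtain ⟨N, hN⟩ := (eventually_all.2 fun k => hexh _ _ (hf.2.2 k)).exists
  exact Set.mem_iUnion.2 ⟨N, hf.1, hf.2.1, hN⟩

theorem loopRate_le_iSup_of_exhaustion (hmono : Monotone Eseq)
    (hexh : ∀ a b, E a b → ∀ᶠ N in atTop, Eseq N a b) (v : V) {m : ℕ} (hm : 0 < m) :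
    loopRate E v m ≤ ⨆ N, loopRate (Eseq N) v m := by
  unfold loopRate
  rw [← ENNReal.coe_mul_log_iSup (by positivity), ← ENat.toENNReal_iSup]
  gcongr
  exact loopCount_le_iSup_of_exhaustion hmono hexh v m

theorem gurevichEntropy_le_iSup_of_exhaustion (hmono : Monotone Eseq)
    (hexh : ∀ a b, E a b → ∀ᶠ N in atTop, Eseq N a b) :
    gurevichEntropy E ≤ ⨆ N, gurevichEntropy (Eseq N) := by
  rw [gurevichEntropy_eq_iSup_limsup_loopRate]
  refine iSup_le fun v => limsup_le_of_le (by isBoundedDefault) ?_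
  filter_upwards [eventually_gt_atTop 0] with m hm
  exact (loopRate_le_iSup_of_exhaustion hmono hexh v hm).trans
    (iSup_mono fun N => loopRate_le_gurevichEntropy hm)

end Exhaustion

theorem gurevichEntropy_tendsto_of_exhaustion_general
    (E : V → V → Prop) (Eseq : ℕ → V → V → Prop)
    (hEmono : ∀ n a b, Eseq n a b → Eseq (n + 1) a b)
    (hEsub : ∀ n a b, Eseq n a b → E a b)
    (hEexh : ∀ a b, E a b → ∃ N, ∀ n ≥ N, Eseq n a b) :
    Tendsto (fun n => gurevichEntropy (Eseq n)) atTop (nhds (gurevichEntropy E)) := by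
  have hmono : Monotone Eseq := monotone_nat_of_le_succ hEmono
  have hexh : ∀ a b, E a b → ∀ᶠ n in atTop, Eseq n a b :=
    fun a b hab => eventually_atTop.2 (hEexh a b hab)
  have hsup : ⨆ n, gurevichEntropy (Eseq n) = gurevichEntropy E :=
    le_antisymm (iSup_le fun n => gurevichEntropy_mono (hEsub n))
      (gurevichEntropy_le_iSup_of_exhaustion hmono hexh)
  exact hsup ▸ tendsto_atTop_iSup (gurevichEntropy_mono.comp hmono)

theorem gurevichEntropy_tendsto_of_exhaustion [Countable V]
    (E : V → V → Prop) (Vseq : ℕ → Set V) (Eseq : ℕ → V → V → Prop)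
    (hVfin : ∀ n, (Vseq n).Finite) (hVmono : ∀ n, Vseq n ⊆ Vseq (n + 1))
    (hEmono : ∀ n a b, Eseq n a b → Eseq (n + 1) a b)
    (hEsub : ∀ n a b, Eseq n a b → E a b)
    (hEin : ∀ n a b, Eseq n a b → a ∈ Vseq n ∧ b ∈ Vseq n)
    (hVexh : ∀ a : V, ∃ N, ∀ n ≥ N, a ∈ Vseq n)
    (hEexh : ∀ a b, E a b → ∃ N, ∀ n ≥ N, Eseq n a b) :
    Tendsto (fun n => gurevichEntropy (Eseq n)) atTop (nhds (gurevichEntropy E)) :=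
  gurevichEntropy_tendsto_of_exhaustion_general E Eseq hEmono hEsub hEexh
end

section
/- Any positive (one-sided) itinerary A ∈ Σ₊(T, P) can be decomposed in at most one way as an infinite concatenation of admissible strips: if n₀ = 0 < n₁ < n₂ < ⋯ and m₀ = 0 < m₁ < m₂ < ⋯ are such that each A_{n_i}…A_{n_{i+1}} and each A_{m_i}…A_{m_{i+1}} corresponds to an admissible strip, then n_i = m_i for all i. -/
/-! The cut points of two decompositions agree by induction. If they agree at `i` but
`n (i+1) < m (i+1)`, then, read from `n i`, the admissible word ending at `m (i+1)` has the
strict admissible prefix ending at `n (i+1)`, which is immediately followed by the admissible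
word ending at `n (i+2)`: this is what non-overlap forbids. -/

variable {P : Type*}

/-- The finite word `x_a x_{a+1} … x_{b-1}` read off a one-sided itinerary `x`. -/
def seg (x : ℕ → P) (a b : ℕ) : List P :=
  List.ofFn (fun j : Fin (b - a) => x (a + (j : ℕ)))

theorem seg_eq_seg_shift {c a : ℕ} (x : ℕ → P) (b : ℕ) (hca : c ≤ a) :
    seg x a b = seg (fun k => x (c + k)) (a - c) (b - c) := by
  have hlen : b - c - (a - c) = b - a := by omega
  refine List.ext_getElem (by simp [seg, hlen]) fun j _ _ => ?_
  simp only [seg, List.getElem_ofFn]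
  congr 1
  omega

section NonOverlap

variable {Adm : List P → Prop}

theorem not_adm_seg_of_adm_prefix
    (hno : ∀ (x : ℕ → P) (n₁ m₁ n₂ : ℕ), 0 < n₁ → n₁ < m₁ → n₁ < n₂ →
      Adm (seg x 0 m₁) → Adm (seg x 0 n₁) → ¬ Adm (seg x n₁ n₂))
    {x : ℕ → P} {c n₁ m₁ n₂ : ℕ}
    (hc : c < n₁) (hm₁ : n₁ < m₁) (hn₂ : n₁ < n₂)
    (hlong : Adm (seg x c m₁)) (hprefix : Adm (seg x c n₁)) : ¬ Adm (seg x n₁ n₂) := by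
  rw [seg_eq_seg_shift x m₁ le_rfl, Nat.sub_self] at hlong
  rw [seg_eq_seg_shift x n₁ le_rfl, Nat.sub_self] at hprefix
  rw [seg_eq_seg_shift x n₂ hc.le]
  exact hno _ _ _ _ (by omega) (by omega) (by omega) hlong hprefix

theorem le_of_adm_decomposition_of_eq
    (hno : ∀ (x : ℕ → P) (n₁ m₁ n₂ : ℕ), 0 < n₁ → n₁ < m₁ → n₁ < n₂ →
      Adm (seg x 0 m₁) → Adm (seg x 0 n₁) → ¬ Adm (seg x n₁ n₂))
    {x : ℕ → P} {n m : ℕ → ℕ} (hn : StrictMono n)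
    (hnadm : ∀ i, Adm (seg x (n i) (n (i + 1)))) (hmadm : ∀ i, Adm (seg x (m i) (m (i + 1))))
    {i : ℕ} (heq : n i = m i) : m (i + 1) ≤ n (i + 1) := by
  by_contra! hlt
  refine not_adm_seg_of_adm_prefix hno (hn i.lt_succ_self) hlt (hn (i + 1).lt_succ_self)
    ?_ (hnadm i) (hnadm (i + 1))
  exact heq ▸ hmadm i

end NonOverlap

/-- Uniqueness of decompositions into admissible words: if the family `Adm` of admissible
words has the non-overlap property (a strict admissible prefix of an admissible word is
never immediately followed by an admissible word), then any itinerary admits at most one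
decomposition as an infinite concatenation of admissible words. -/
theorem admissible_decomposition_unique
    (Adm : List P → Prop)
    (hno : ∀ (x : ℕ → P) (n₁ m₁ n₂ : ℕ), 0 < n₁ → n₁ < m₁ → n₁ < n₂ →
      Adm (seg x 0 m₁) → Adm (seg x 0 n₁) → ¬ Adm (seg x n₁ n₂))
    (x : ℕ → P) (n m : ℕ → ℕ)
    (hn0 : n 0 = 0) (hm0 : m 0 = 0) (hnmono : StrictMono n) (hmmono : StrictMono m)
    (hnadm : ∀ i, Adm (seg x (n i) (n (i + 1)))) (hmadm : ∀ i, Adm (seg x (m i) (m (i + 1)))) :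
    ∀ i, n i = m i := by
  intro i
  induction i with
  | zero => rw [hn0, hm0]
  | succ i ih =>
    exact le_antisymm (le_of_adm_decomposition_of_eq hno hmmono hmadm hnadm ih.symm)
      (le_of_adm_decomposition_of_eq hno hnmono hnadm hmadm ih)
end

section
/- Let ℓ be a line segment dividing a convex quadrilateral Q in the plane into two subsets Q₊ and Q₋ with nonempty interiors, and let R be a convex set containing Q. If there exist segments s₊ ⊆ Q₊ and s₋ ⊆ Q₋ each of which crosses R (i.e., joins two points of opposite sides of ∂R) and ℓ has both endpoints on ∂R, then ℓ also crosses R. Equivalently (contrapositive used in the paper): if ℓ does not cross R, then there cannot exist crossing segments in both Q₊ and Q₋. -/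
open Set

/-! The level line `{f = c}` meets the convex set `S₁ ∩ R` because `pm` and `pp` lie in it on
opposite sides of the line (intermediate value theorem), and likewise for `S₂ ∩ R` with `qm`
and `qp`; convexity of `R` then puts the segment between the two meeting points in `R`. -/

theorem Convex.exists_mem_eq_of_le {E : Type*} [AddCommGroup E] [Module ℝ E] [TopologicalSpace E]
    [IsTopologicalAddGroup E] [ContinuousSMul ℝ E] {S : Set E} (hS : Convex ℝ S) {f : E → ℝ}
    (hf : ContinuousOn f S) {x y : E} (hx : x ∈ S) (hy : y ∈ S) {c : ℝ} (hxc : f x ≤ c)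
    (hyc : c ≤ f y) : ∃ z ∈ S, f z = c :=
  hS.isPreconnected.intermediate_value hx hy hf ⟨hxc, hyc⟩

theorem dividing_line_crosses_general
    (R Q : Set (EuclideanSpace ℝ (Fin 2))) (hR : Convex ℝ R)
    (hQR : Q ⊆ R)
    (f : EuclideanSpace ℝ (Fin 2) →ₗ[ℝ] ℝ) (c : ℝ)
    (S₁ S₂ : Set (EuclideanSpace ℝ (Fin 2)))
    (hS₁ : Convex ℝ S₁) (hS₂ : Convex ℝ S₂)
    (pp qp pm qm : EuclideanSpace ℝ (Fin 2))
    (hpp : pp ∈ S₁) (hqp : qp ∈ S₂) (hsp : segment ℝ pp qp ⊆ Q ∩ {z | c ≤ f z})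
    (hpm : pm ∈ S₁) (hqm : qm ∈ S₂) (hsm : segment ℝ pm qm ⊆ Q ∩ {z | f z ≤ c}) :
    ∃ a ∈ S₁, ∃ b ∈ S₂, f a = c ∧ f b = c ∧ segment ℝ a b ⊆ R := by
  have hf : Continuous f := f.continuous_of_finiteDimensional
  obtain ⟨hppQ, hfpp⟩ := hsp (left_mem_segment ℝ pp qp)
  obtain ⟨hqpQ, hfqp⟩ := hsp (right_mem_segment ℝ pp qp)
  obtain ⟨hpmQ, hfpm⟩ := hsm (left_mem_segment ℝ pm qm)
  obtain ⟨hqmQ, hfqm⟩ := hsm (right_mem_segment ℝ pm qm)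
  obtain ⟨a, ⟨haS₁, haR⟩, hfa⟩ := (hS₁.inter hR).exists_mem_eq_of_le hf.continuousOn
    ⟨hpm, hQR hpmQ⟩ ⟨hpp, hQR hppQ⟩ hfpm hfpp
  obtain ⟨b, ⟨hbS₂, hbR⟩, hfb⟩ := (hS₂.inter hR).exists_mem_eq_of_le hf.continuousOn
    ⟨hqm, hQR hqmQ⟩ ⟨hqp, hQR hqpQ⟩ hfqm hfqp
  exact ⟨a, haS₁, b, hbS₂, hfa, hfb, hR.segment_subset haR hbR⟩

/-- Planar convexity fact: if a line `{f = c}` divides a convex set `Q ⊆ R` into the parts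
`Q₊ = Q ∩ {f ≥ c}` and `Q₋ = Q ∩ {f ≤ c}` (both with nonempty interior), and two opposite
"sides" `S₁, S₂` of the convex region `R` (disjoint convex subsets of the frontier of `R`)
are joined by a crossing segment inside `Q₊` and by a crossing segment inside `Q₋`, then the
dividing line itself crosses `R`: it meets `S₁` and `S₂`, and the corresponding segment lies
in `R`. -/
theorem dividing_line_crosses
    (R Q : Set (EuclideanSpace ℝ (Fin 2))) (hR : Convex ℝ R) (hQ : Convex ℝ Q)
    (hQR : Q ⊆ R)
    (f : EuclideanSpace ℝ (Fin 2) →ₗ[ℝ] ℝ) (c : ℝ)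
    (hQplus : (interior (Q ∩ {z | c ≤ f z})).Nonempty)
    (hQminus : (interior (Q ∩ {z | f z ≤ c})).Nonempty)
    (S₁ S₂ : Set (EuclideanSpace ℝ (Fin 2)))
    (hS₁ : Convex ℝ S₁) (hS₂ : Convex ℝ S₂) (hS₁R : S₁ ⊆ frontier R) (hS₂R : S₂ ⊆ frontier R)
    (hdisj : Disjoint S₁ S₂)
    (pp qp pm qm : EuclideanSpace ℝ (Fin 2))
    (hpp : pp ∈ S₁) (hqp : qp ∈ S₂) (hsp : segment ℝ pp qp ⊆ Q ∩ {z | c ≤ f z})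
    (hpm : pm ∈ S₁) (hqm : qm ∈ S₂) (hsm : segment ℝ pm qm ⊆ Q ∩ {z | f z ≤ c}) :
    ∃ a ∈ S₁, ∃ b ∈ S₂, f a = c ∧ f b = c ∧ segment ℝ a b ⊆ R :=
  dividing_line_crosses_general R Q hR hQR f c S₁ S₂ hS₁ hS₂ pp qp pm qm hpp hqp hsp hpm hqm hsm
end

section
/- Let T be an ergodic invertible measure-preserving transformation of a probability space (X, μ). Let W^s : X → subsets of X be a measurable T-equivariant family (T(W^s(x)) ⊆ W^s(Tx)) and let z ∈ X be such that {x : x ∈ W^s(z)} has the property that whenever T^{n}x ∈ W^s(z) for two integers n₁ < n₂ we have T^{n₂−n₁}(W^s(z)) ⊆ W^s(z), and all points of W^s(z) then converge to a single periodic orbit. If μ gives positive measure to the set of x with infinitely many n ≥ 0 such that T^n x ∈ W^s(z), then μ is atomic (its ergodic decomposition has an atom). -/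
/-!
Two visits of a single orbit to `W z`, at times `n₁ < n₂`, make `W z` invariant under
`T^[n₂ - n₁]`, so every point of `W z` is asymptotic to one periodic orbit `O`. Every point
visiting `W z` then eventually stays in each `ε`-thickening of `O`; since `T` preserves `μ`,
the set of such points has measure at most `μ (thickening ε O)`, hence at most `μ O`. A finite
set of positive measure contains an atom.
-/

open MeasureTheory Filter Metric Set Function Topology

theorem Function.IsPeriodicPt.finite_range_iterate {α : Type*} {f : α → α} {p : α} {q : ℕ}
    (h : IsPeriodicPt f q p) (hq : 0 < q) : (range fun n => f^[n] p).Finite :=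
  ((finite_Iio q).image fun n => f^[n] p).subset <| by
    rintro _ ⟨k, rfl⟩
    exact ⟨k % q, Nat.mod_lt _ hq, h.iterate_mod_apply k⟩

theorem Function.eventually_iterate_mem_of_eventually_iterate_iterate_mem {α : Type*}
    {f : α → α} {U : Set α} {x : α} (k : ℕ) (h : ∀ᶠ n in atTop, f^[n] (f^[k] x) ∈ U) :
    ∀ᶠ n in atTop, f^[n] x ∈ U := by
  filter_upwards [(tendsto_sub_atTop_nat k).eventually h, eventually_ge_atTop k] with n hn hkn
  rwa [← iterate_add_apply, Nat.sub_add_cancel hkn] at hn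

theorem Function.eventually_iterate_mem_thickening_range {X : Type*} [PseudoMetricSpace X]
    {f : X → X} {y p : X} (h : Tendsto (fun n => dist (f^[n] y) (f^[n] p)) atTop (𝓝 0))
    {ε : ℝ} (hε : 0 < ε) :
    ∀ᶠ n in atTop, f^[n] y ∈ thickening ε (range fun n => f^[n] p) :=
  (h.eventually (gt_mem_nhds hε)).mono fun n hn => mem_thickening_iff.2 ⟨_, mem_range_self n, hn⟩

theorem MeasureTheory.MeasurePreserving.measure_setOf_eventually_iterate_mem_le
    {α : Type*} [MeasurableSpace α] {μ : Measure α} {f : α → α} (hf : MeasurePreserving f μ μ)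
    {U : Set α} (hU : NullMeasurableSet U μ) :
    μ {x | ∀ᶠ n in atTop, f^[n] x ∈ U} ≤ μ U := by
  have hunion : {x | ∀ᶠ n in atTop, f^[n] x ∈ U} = ⋃ m, ⋂ n ∈ Ici m, f^[n] ⁻¹' U := by
    ext x
    simp only [mem_ofPred_eq, eventually_atTop, mem_iUnion, mem_iInter, mem_Ici, mem_preimage]
  have hmono : Monotone fun m : ℕ => ⋂ n ∈ Ici m, f^[n] ⁻¹' U := fun a b hab =>
    biInter_mono (Ici_subset_Ici.2 hab) fun _ _ => le_rfl
  rw [hunion, hmono.measure_iUnion]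
  refine iSup_le fun m => ?_
  calc μ (⋂ n ∈ Ici m, f^[n] ⁻¹' U) ≤ μ (f^[m] ⁻¹' U) :=
        measure_mono (biInter_subset_of_mem self_mem_Ici)
    _ = μ U := (hf.iterate m).measure_preimage hU

theorem MeasureTheory.measure_le_of_forall_le_measure_thickening {X : Type*}
    [PseudoMetricSpace X] [MeasurableSpace X] [OpensMeasurableSpace X] {μ : Measure X}
    [IsFiniteMeasure μ] {s K : Set X} (hK : IsClosed K) (h : ∀ ε > 0, μ s ≤ μ (thickening ε K)) :
    μ s ≤ μ K :=
  ge_of_tendsto (tendsto_measure_thickening_of_isClosed ⟨1, one_pos, measure_ne_top _ _⟩ hK)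
    (eventually_nhdsWithin_of_forall h)

theorem MeasureTheory.MeasurePreserving.measure_setOf_asymptotic_le_measure_periodic_orbit
    {X : Type*} [MetricSpace X] [MeasurableSpace X] [OpensMeasurableSpace X] {μ : Measure X}
    [IsFiniteMeasure μ] {f : X → X} (hf : MeasurePreserving f μ μ) {p : X} {q : ℕ}
    (hp : IsPeriodicPt f q p) (hq : 0 < q) :
    μ {x | ∃ k, Tendsto (fun n => dist (f^[n] (f^[k] x)) (f^[n] p)) atTop (𝓝 0)} ≤
      μ (range fun n => f^[n] p) := by
  refine measure_le_of_forall_le_measure_thickening (hp.finite_range_iterate hq).isClosed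
    fun ε hε => ?_
  refine le_trans (measure_mono fun x ⟨k, hk⟩ => ?_)
    (hf.measure_setOf_eventually_iterate_mem_le isOpen_thickening.nullMeasurableSet)
  exact eventually_iterate_mem_of_eventually_iterate_iterate_mem k
    (eventually_iterate_mem_thickening_range hk hε)

theorem MeasureTheory.exists_measure_singleton_ne_zero_of_finite {α : Type*}
    [MeasurableSpace α] {μ : Measure α} {s : Set α} (hs : s.Finite) (h : μ s ≠ 0) :
    ∃ x, μ {x} ≠ 0 := by
  by_contra! hnull
  have : NullSingletonClass μ := ⟨hnull⟩
  exact h (hs.countable.measure_zero μ)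

theorem recurrent_visits_to_stable_set_implies_atom_general
    {X : Type*} [MetricSpace X] [MeasurableSpace X] [BorelSpace X]
    (μ : Measure X) [IsProbabilityMeasure μ]
    (T : X → X)
    (hT : MeasurePreserving T μ μ)
    (W : X → Set X)
    (z : X)
    (hrec : ∀ n₁ n₂ : ℕ, n₁ < n₂ → (∃ x : X, T^[n₁] x ∈ W z ∧ T^[n₂] x ∈ W z) →
      T^[n₂ - n₁] '' (W z) ⊆ W z)
    (hconv : (∃ m : ℕ, 0 < m ∧ T^[m] '' (W z) ⊆ W z) →
      ∃ p : X, (∃ q : ℕ, 0 < q ∧ T^[q] p = p) ∧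
        ∀ y ∈ W z, Tendsto (fun n : ℕ => dist (T^[n] y) (T^[n] p)) atTop (nhds 0))
    (hpos : 0 < μ {x : X | {n : ℕ | T^[n] x ∈ W z}.Infinite}) :
    ∃ p : X, μ {p} ≠ 0 := by
  obtain ⟨x₀, hx₀⟩ := nonempty_of_measure_ne_zero hpos.ne'
  obtain ⟨n₁, hn₁⟩ := hx₀.nonempty
  obtain ⟨n₂, hn₂, hlt⟩ := hx₀.exists_gt n₁
  obtain ⟨p, ⟨q, hq, hp⟩, hasymp⟩ :=
    hconv ⟨n₂ - n₁, Nat.sub_pos_of_lt hlt, hrec n₁ n₂ hlt ⟨x₀, hn₁, hn₂⟩⟩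
  have hvisits : {x : X | {n : ℕ | T^[n] x ∈ W z}.Infinite} ⊆
      {x | ∃ k, Tendsto (fun n => dist (T^[n] (T^[k] x)) (T^[n] p)) atTop (𝓝 0)} :=
    fun x hx => let ⟨k, hk⟩ := hx.nonempty; ⟨k, hasymp _ hk⟩
  refine exists_measure_singleton_ne_zero_of_finite (IsPeriodicPt.finite_range_iterate hp hq) ?_
  exact (hpos.trans_le <| (measure_mono hvisits).trans <|
    hT.measure_setOf_asymptotic_le_measure_periodic_orbit hp hq).ne'

/-- Recurrence argument: for an ergodic invertible measure-preserving map, if an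
equivariant family of (stable) sets is such that two visits of an orbit to `W z` force an
iterate of `T` to map `W z` into itself, and such an invariance forces all points of `W z`
to converge to a single periodic orbit, then positive measure of the set of points visiting
`W z` infinitely often forces `μ` to have an atom. -/
theorem recurrent_visits_to_stable_set_implies_atom
    {X : Type*} [MetricSpace X] [MeasurableSpace X] [BorelSpace X]
    (μ : Measure X) [IsProbabilityMeasure μ]
    (T S : X → X) (hTS : Function.LeftInverse S T) (hST : Function.RightInverse S T)
    (hT : MeasurePreserving T μ μ) (hErg : Ergodic T μ)
    (W : X → Set X) (hequiv : ∀ x, T '' (W x) ⊆ W (T x))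
    (z : X) (hWz : MeasurableSet (W z))
    (hrec : ∀ n₁ n₂ : ℕ, n₁ < n₂ → (∃ x : X, T^[n₁] x ∈ W z ∧ T^[n₂] x ∈ W z) →
      T^[n₂ - n₁] '' (W z) ⊆ W z)
    (hconv : (∃ m : ℕ, 0 < m ∧ T^[m] '' (W z) ⊆ W z) →
      ∃ p : X, (∃ q : ℕ, 0 < q ∧ T^[q] p = p) ∧
        ∀ y ∈ W z, Tendsto (fun n : ℕ => dist (T^[n] y) (T^[n] p)) atTop (nhds 0))
    (hpos : 0 < μ {x : X | {n : ℕ | T^[n] x ∈ W z}.Infinite}) :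
    ∃ p : X, μ {p} ≠ 0 :=
  recurrent_visits_to_stable_set_implies_atom_general μ T hT W z hrec hconv hpos
end
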